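/- Let L be a finite-dimensional solvable Lie algebra of nilpotent length k with more than one minimal ideal. Then there exists a minimal ideal A of L such that L/A also has nilpotent length k. -/

import Mathlib

/-- The canonical quotient map `L → L ⧸ I` as a morphism of Lie algebras. -/
def lieQuotMk {F L : Type*} [Field F] [LieRing L] [LieAlgebra F L] (I : LieIdeal F L) :
    L →ₗ⁅F⁆ L ⧸ I where
  toLinearMap := (LieSubmodule.Quotient.mk' I).toLinearMap
  map_lie' := rfl

variable (F : Type*) [Field F]

/-- The nilradical: the largest nilpotent ideal of a (finite-dimensional) Lie algebra. -/
noncomputable def nilrad (L : Type*) [LieRing L] [LieAlgebra F L] : LieIdeal F L :=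
  sSup {I : LieIdeal F L | LieRing.IsNilpotent I}

/-- The upper nilpotent series: `N 0 = 0`, `N (i+1) / N i = nilradical of L ⧸ N i`. -/
noncomputable def upperNil (L : Type*) [LieRing L] [LieAlgebra F L] : ℕ → LieIdeal F L
  | 0 => ⊥
  | n + 1 => LieIdeal.comap (lieQuotMk (upperNil L n)) (nilrad F (L ⧸ upperNil L n))

/-- The nilpotent length: the least `n` with `N n = L`. -/
noncomputable def nilLen (L : Type*) [LieRing L] [LieAlgebra F L] : ℕ :=
  sInf {n : ℕ | upperNil F L n = ⊤}

/-- The nilpotent residual `γ∞(L)`: the smallest ideal with nilpotent quotient. -/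
noncomputable def nilResidual (L : Type*) [LieRing L] [LieAlgebra F L] : LieIdeal F L :=
  sInf {I : LieIdeal F L | LieRing.IsNilpotent (L ⧸ I)}

/-- The lower nilpotent series: `Γ 0 = L`, `Γ (i+1) = γ∞(Γ i)`, viewed as subalgebras of `L`. -/
noncomputable def lowerNil (L : Type*) [LieRing L] [LieAlgebra F L] : ℕ → LieSubalgebra F L
  | 0 => ⊤
  | n + 1 =>
      LieSubalgebra.map (lowerNil L n).incl
        (LieIdeal.toLieSubalgebra F (lowerNil L n) (nilResidual F (lowerNil L n)))

/-- `M` is a maximal (proper) subalgebra of `L`. -/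
def IsMaxSub {L : Type*} [LieRing L] [LieAlgebra F L] (M : LieSubalgebra F L) : Prop :=
  M ≠ ⊤ ∧ ∀ K : LieSubalgebra F L, M < K → K = ⊤

/-- The Frattini subalgebra: the intersection of all maximal subalgebras. -/
noncomputable def lieFrattini (L : Type*) [LieRing L] [LieAlgebra F L] : LieSubalgebra F L :=
  sInf {M : LieSubalgebra F L | IsMaxSub F M}

/-- The core of a subalgebra `U`: the largest ideal of `L` contained in `U`. -/
noncomputable def lieCore {L : Type*} [LieRing L] [LieAlgebra F L] (U : LieSubalgebra F L) :
    LieIdeal F L :=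
  sSup {I : LieIdeal F L | (I : Set L) ⊆ (U : Set L)}

/-- `A` is a minimal ideal of `L`. -/
def IsMinIdeal {L : Type*} [LieRing L] [LieAlgebra F L] (A : LieIdeal F L) : Prop :=
  A ≠ ⊥ ∧ ∀ B : LieIdeal F L, B < A → B = ⊥

/-- The Frattini series: `φ i (L) / N (i-1) (L) = φ(L ⧸ N (i-1) (L))` for `i ≥ 1`. -/
noncomputable def fratSeries (L : Type*) [LieRing L] [LieAlgebra F L] (i : ℕ) :
    LieSubalgebra F L :=
  LieSubalgebra.comap (lieQuotMk (upperNil F L (i - 1)))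
    (lieFrattini F (L ⧸ upperNil F L (i - 1)))

/-- `L` is extreme: `N i (L) / φ i (L)` is a chief factor of `L` for each `1 ≤ i ≤ n(L)`. -/
def IsExtremeLie (L : Type*) [LieRing L] [LieAlgebra F L] : Prop :=
  ∀ i, 1 ≤ i → i ≤ nilLen F L →
    (fratSeries F L i : Set L) ⊆ (upperNil F L i : Set L) ∧
    (fratSeries F L i : Set L) ≠ (upperNil F L i : Set L) ∧
    ∀ C : LieIdeal F L, (fratSeries F L i : Set L) ⊆ (C : Set L) → C ≤ upperNil F L i →
      (C : Set L) = (fratSeries F L i : Set L) ∨ C = upperNil F L i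

/-- `L` is supersolvable: it has a chain of ideals with one-dimensional quotients. -/
def IsSupersolvable (L : Type*) [LieRing L] [LieAlgebra F L] : Prop :=
  ∃ (n : ℕ) (C : ℕ → LieIdeal F L), C 0 = ⊥ ∧ C n = ⊤ ∧
    ∀ i < n, C i ≤ C (i + 1) ∧
      Module.finrank F (C (i + 1)) = Module.finrank F (C i) + 1

/-- A minimal ideal `A` is complemented if some maximal subalgebra `M` satisfies
`L = A + M` and `A ∩ M = 0`. -/
def IsComplementedIdeal {L : Type*} [LieRing L] [LieAlgebra F L] (A : LieIdeal F L) : Prop :=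
  ∃ M : LieSubalgebra F L, IsMaxSub F M ∧
    A.toSubmodule ⊔ M.toSubmodule = ⊤ ∧ A.toSubmodule ⊓ M.toSubmodule = ⊥

/-!
An ideal `D` lies in `N (n+1)` exactly when some term `⁅D, ⁅D, …, ⁅D, L⁆⁆⁆` of its lower central
series lies in `N n`: the image of `D` in `L / N n` is then a nilpotent ideal, i.e. lies in the
nilradical. This criterion is stable under finite intersections of kernels, so by induction on `n`
the algebras of nilpotent length at most `n` form a formation: if `A ⊓ B = 0` and both `L / A` and
`L / B` have nilpotent length at most `n`, so does `L`. Since quotients never increase the nilpotent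
length, if every minimal ideal `A` had `n(L / A) < n(L)`, two distinct (hence trivially
intersecting) minimal ideals would force `n(L) ≤ n(L) - 1`.
-/

variable {F}

open LieModule

theorem LieSubmodule.isNilpotent_iff_of_lie_top_le {R L M : Type*} [CommRing R] [LieRing L]
    [LieAlgebra R L] [AddCommGroup M] [Module R M] [LieRingModule L M] [LieModule R L M]
    {N : LieSubmodule R L M} (hN : ⁅(⊤ : LieIdeal R L), (⊤ : LieSubmodule R L M)⁆ ≤ N) :
    IsNilpotent L N ↔ IsNilpotent L M := by
  have hlcs : ∀ k, lowerCentralSeries R L M (k + 1) ≤ N.lcs k := by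
    intro k
    induction k with
    | zero => simpa using hN
    | succ k ih => simpa only [lowerCentralSeries_succ, lcs_succ] using mono_lie_right _ ih
  rw [N.isNilpotent_iff_exists_lcs_eq_bot, isNilpotent_iff R]
  refine ⟨fun ⟨k, hk⟩ ↦ ⟨k + 1, le_bot_iff.1 (hk ▸ hlcs k)⟩, fun ⟨k, hk⟩ ↦ ⟨k, ?_⟩⟩
  change (⊤ : LieSubmodule R L M).lcs k = ⊥ at hk
  rw [← le_bot_iff, lcs_le_iff] at hk ⊢
  exact le_top.trans hk

namespace LieIdeal

variable {R L L' : Type*} [CommRing R] [LieRing L] [LieAlgebra R L] [LieRing L'] [LieAlgebra R L']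

theorem lcs_antitone (I : LieIdeal R L) : Antitone (I.lcs L) :=
  antitone_nat_of_succ_le fun k ↦ by
    rw [lcs_succ]
    exact LieSubmodule.lie_le_right _ _

theorem lcs_mono {I J : LieIdeal R L} (h : I ≤ J) (k : ℕ) : I.lcs L k ≤ J.lcs L k := by
  induction k with
  | zero => exact le_rfl
  | succ k ih => simpa only [lcs_succ] using LieSubmodule.mono_lie h ih

theorem lcs_sup_le (I J : LieIdeal R L) (m n : ℕ) :
    (I ⊔ J).lcs L (m + n) ≤ I.lcs L m ⊔ J.lcs L n := by
  induction h : m + n generalizing m n with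
  | zero =>
    obtain ⟨rfl, rfl⟩ : m = 0 ∧ n = 0 := by omega
    simp
  | succ s ih =>
    rcases m with _ | m
    · simp
    rcases n with _ | n
    · simp
    rw [lcs_succ, LieSubmodule.sup_lie]
    apply sup_le
    · grw [ih m (n + 1) (by omega), LieSubmodule.lie_sup]
      exact sup_le_sup (lcs_succ I L m).ge (LieSubmodule.lie_le_right _ _)
    · grw [ih (m + 1) n (by omega), LieSubmodule.lie_sup]
      exact sup_le_sup (LieSubmodule.lie_le_right _ _) (lcs_succ J L n).ge

theorem map_lcs {f : L →ₗ⁅R⁆ L'} (hf : Function.Surjective f) (I : LieIdeal R L) (k : ℕ) :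
    map f (I.lcs L k) = (I.map f).lcs L' k := by
  induction k with
  | zero => rw [lcs_zero, lcs_zero, ← f.idealRange_eq_map, f.idealRange_eq_top_of_surjective hf]
  | succ k ih => rw [lcs_succ, lcs_succ, map_bracket_eq f hf, ih]

theorem isNilpotent_iff_exists_lcs_eq_bot (I : LieIdeal R L) :
    LieRing.IsNilpotent I ↔ ∃ k, I.lcs L k = ⊥ := by
  let H : LieSubalgebra R L := I
  have hI : ⁅(⊤ : LieIdeal R H), (⊤ : LieSubmodule R H L)⁆ ≤ H.toLieSubmodule :=
    (LieSubmodule.lie_le_iff _ _ _).2 fun x _ y _ ↦ lie_mem_left R L I x y x.2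
  -- the Lie algebra `I` is definitionally the `I`-submodule `I` of `L`
  change IsNilpotent H H.toLieSubmodule ↔ _
  rw [LieSubmodule.isNilpotent_iff_of_lie_top_le hI, isNilpotent_iff R]
  simp_rw [← LieSubmodule.toSubmodule_inj, coe_lcs_eq, LieSubmodule.bot_toSubmodule]
  rfl

theorem isNilpotent_sup {I J : LieIdeal R L} (hI : LieRing.IsNilpotent I)
    (hJ : LieRing.IsNilpotent J) : LieRing.IsNilpotent ↥(I ⊔ J) := by
  rw [isNilpotent_iff_exists_lcs_eq_bot] at hI hJ ⊢
  obtain ⟨m, hm⟩ := hI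
  obtain ⟨n, hn⟩ := hJ
  exact ⟨m + n, le_bot_iff.1 <| (lcs_sup_le I J m n).trans (by rw [hm, hn, sup_bot_eq])⟩

theorem isNilpotent_of_le {I J : LieIdeal R L} (h : I ≤ J) (hJ : LieRing.IsNilpotent J) :
    LieRing.IsNilpotent I := by
  rw [isNilpotent_iff_exists_lcs_eq_bot] at hJ ⊢
  obtain ⟨k, hk⟩ := hJ
  exact ⟨k, le_bot_iff.1 (hk ▸ lcs_mono h k)⟩

theorem isNilpotent_map_iff {f : L →ₗ⁅R⁆ L'} (hf : Function.Surjective f) (I : LieIdeal R L) :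
    LieRing.IsNilpotent (I.map f) ↔ ∃ k, I.lcs L k ≤ f.ker := by
  simp_rw [isNilpotent_iff_exists_lcs_eq_bot, ← map_lcs hf, map_eq_bot_iff]

end LieIdeal

section UpperNilpotentSeries

variable {L L₁ L₂ : Type*} [LieRing L] [LieAlgebra F L] [LieRing L₁] [LieAlgebra F L₁]
  [LieRing L₂] [LieAlgebra F L₂]

theorem isNilpotent_nilrad [IsNoetherian F L] : LieRing.IsNilpotent (nilrad F L) := by
  have hwf := CompleteLattice.WellFoundedGT.isSupClosedCompact (LieIdeal F L) inferInstance
  refine hwf {I : LieIdeal F L | LieRing.IsNilpotent I} ⟨⊥, ?_⟩ fun I hI J hJ ↦ ?_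
  · exact (LieIdeal.isNilpotent_iff_exists_lcs_eq_bot _).2 ⟨1, LieSubmodule.bot_lie _⟩
  · exact LieIdeal.isNilpotent_sup hI hJ

theorem le_nilrad_iff [IsNoetherian F L] {I : LieIdeal F L} :
    I ≤ nilrad F L ↔ LieRing.IsNilpotent I :=
  ⟨fun h ↦ LieIdeal.isNilpotent_of_le h isNilpotent_nilrad, fun h ↦ le_sSup h⟩

theorem nilrad_ne_bot [Nontrivial L] [LieAlgebra.IsSolvable L] : nilrad F L ≠ ⊥ := by
  have := LieAlgebra.abelian_derivedAbelianOfIdeal (⊤ : LieIdeal F L)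
  have hnil : LieRing.IsNilpotent (LieAlgebra.derivedAbelianOfIdeal (⊤ : LieIdeal F L)) :=
    inferInstance
  refine ne_bot_of_le_ne_bot ?_ (le_sSup hnil)
  rw [Ne, LieAlgebra.abelian_of_solvable_ideal_eq_bot_iff]
  exact top_ne_bot

theorem lieQuotMk_surjective (I : LieIdeal F L) : Function.Surjective (lieQuotMk I) :=
  LieSubmodule.Quotient.surjective_mk' I

instance [LieAlgebra.IsSolvable L] (I : LieIdeal F L) : LieAlgebra.IsSolvable (L ⧸ I) :=
  (lieQuotMk_surjective I).lieAlgebra_isSolvable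

theorem ker_lieQuotMk (I : LieIdeal F L) : (lieQuotMk I).ker = I :=
  LieSubmodule.Quotient.mk'_ker I

theorem lieQuotMk_eq_zero {I : LieIdeal F L} {x : L} : lieQuotMk I x = 0 ↔ x ∈ I := by
  rw [← LieHom.mem_ker, ker_lieQuotMk]

theorem upperNil_succ (n : ℕ) :
    upperNil F L (n + 1) = (nilrad F (L ⧸ upperNil F L n)).comap (lieQuotMk (upperNil F L n)) :=
  rfl

theorem upperNil_monotone : Monotone (upperNil F L) :=
  monotone_nat_of_le_succ fun n x hx ↦ by
    rw [upperNil_succ, LieIdeal.mem_comap, lieQuotMk_eq_zero.2 hx]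
    exact zero_mem _

theorem le_upperNil_succ_iff [IsNoetherian F L] (D : LieIdeal F L) (n : ℕ) :
    D ≤ upperNil F L (n + 1) ↔ ∃ c, D.lcs L c ≤ upperNil F L n := by
  rw [upperNil_succ, ← LieIdeal.map_le_iff_le_comap, le_nilrad_iff,
    LieIdeal.isNilpotent_map_iff (lieQuotMk_surjective _), ker_lieQuotMk]

theorem le_comap_upperNil_succ_iff [IsNoetherian F L₁] {f : L →ₗ⁅F⁆ L₁}
    (hf : Function.Surjective f) (D : LieIdeal F L) (n : ℕ) :
    D ≤ (upperNil F L₁ (n + 1)).comap f ↔ ∃ c, D.lcs L c ≤ (upperNil F L₁ n).comap f := by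
  rw [← LieIdeal.map_le_iff_le_comap, le_upperNil_succ_iff (D.map f) n]
  simp_rw [← LieIdeal.map_le_iff_le_comap, LieIdeal.map_lcs hf]

theorem upperNil_le_comap_upperNil [IsNoetherian F L] [IsNoetherian F L₁] {f : L →ₗ⁅F⁆ L₁}
    (hf : Function.Surjective f) (n : ℕ) : upperNil F L n ≤ (upperNil F L₁ n).comap f := by
  induction n with
  | zero => exact bot_le
  | succ n ih =>
    obtain ⟨c, hc⟩ := (le_upperNil_succ_iff (upperNil F L (n + 1)) n).1 le_rfl
    exact (le_comap_upperNil_succ_iff hf _ n).2 ⟨c, hc.trans ih⟩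

theorem comap_upperNil_inf_comap_upperNil_le [IsNoetherian F L] [IsNoetherian F L₁]
    [IsNoetherian F L₂] {f : L →ₗ⁅F⁆ L₁} {g : L →ₗ⁅F⁆ L₂} (hf : Function.Surjective f)
    (hg : Function.Surjective g) (hfg : f.ker ⊓ g.ker = ⊥) (n : ℕ) :
    (upperNil F L₁ n).comap f ⊓ (upperNil F L₂ n).comap g ≤ upperNil F L n := by
  induction n with
  | zero => exact hfg.le
  | succ n ih =>
    obtain ⟨a, ha⟩ := (le_comap_upperNil_succ_iff hf _ n).1 inf_le_left
    obtain ⟨b, hb⟩ := (le_comap_upperNil_succ_iff hg _ n).1 inf_le_right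
    refine (le_upperNil_succ_iff _ n).2 ⟨max a b, le_trans (le_inf ?_ ?_) ih⟩
    · exact (LieIdeal.lcs_antitone _ (le_max_left a b)).trans ha
    · exact (LieIdeal.lcs_antitone _ (le_max_right a b)).trans hb

/-- The series stabilises by the ascending chain condition, and it can only stabilise at `L`
since the nilradical of a nonzero solvable algebra is nonzero. -/
theorem exists_upperNil_eq_top [IsNoetherian F L] [LieAlgebra.IsSolvable L] :
    ∃ n, upperNil F L n = ⊤ := by
  obtain ⟨n, hn⟩ :=
    wellFoundedGT_iff_monotone_chain_condition.1 inferInstance ⟨upperNil F L, upperNil_monotone⟩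
  have hstable : upperNil F L (n + 1) = upperNil F L n := (hn (n + 1) n.le_succ).symm
  refine ⟨n, by_contra fun hne ↦ ?_⟩
  have : Nontrivial (L ⧸ upperNil F L n) := Submodule.Quotient.nontrivial_iff.2 (by simpa using hne)
  refine nilrad_ne_bot (F := F) (L := L ⧸ upperNil F L n) ?_
  have hsurj := lieQuotMk_surjective (upperNil F L n)
  calc nilrad F (L ⧸ upperNil F L n)
      = (upperNil F L (n + 1)).map (lieQuotMk (upperNil F L n)) := by
        rw [upperNil_succ,
          LieIdeal.map_comap_eq ((lieQuotMk _).isIdealMorphism_of_surjective hsurj),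
          (lieQuotMk _).idealRange_eq_top_of_surjective hsurj, top_inf_eq]
    _ = ⊥ := by rw [hstable, LieIdeal.map_eq_bot_iff, ker_lieQuotMk]

end UpperNilpotentSeries

section NilpotentLength

variable {L L₁ L₂ : Type*} [LieRing L] [LieAlgebra F L] [LieRing L₁] [LieAlgebra F L₁]
  [LieRing L₂] [LieAlgebra F L₂]

theorem upperNil_eq_top_iff [IsNoetherian F L] [LieAlgebra.IsSolvable L] {n : ℕ} :
    upperNil F L n = ⊤ ↔ nilLen F L ≤ n :=
  ⟨fun h ↦ Nat.sInf_le h, fun h ↦ top_le_iff.1 <|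
    (Nat.sInf_mem (exists_upperNil_eq_top (F := F) (L := L))).ge.trans (upperNil_monotone h)⟩

theorem nilLen_le_of_surjective [IsNoetherian F L] [LieAlgebra.IsSolvable L] [IsNoetherian F L₁]
    {f : L →ₗ⁅F⁆ L₁} (hf : Function.Surjective f) : nilLen F L₁ ≤ nilLen F L := by
  refine Nat.sInf_le (eq_top_iff.2 fun y _ ↦ ?_)
  obtain ⟨x, rfl⟩ := hf y
  have htop : upperNil F L (nilLen F L) = ⊤ := upperNil_eq_top_iff.2 le_rfl
  exact upperNil_le_comap_upperNil hf _ (htop ▸ LieSubmodule.mem_top x)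

theorem nilLen_le_of_ker_inf_ker_eq_bot [IsNoetherian F L] [IsNoetherian F L₁] [IsNoetherian F L₂]
    [LieAlgebra.IsSolvable L₁] [LieAlgebra.IsSolvable L₂] {f : L →ₗ⁅F⁆ L₁} {g : L →ₗ⁅F⁆ L₂}
    (hf : Function.Surjective f) (hg : Function.Surjective g) (hfg : f.ker ⊓ g.ker = ⊥) {n : ℕ}
    (h₁ : nilLen F L₁ ≤ n) (h₂ : nilLen F L₂ ≤ n) : nilLen F L ≤ n := by
  rw [← upperNil_eq_top_iff] at h₁ h₂
  have hle := comap_upperNil_inf_comap_upperNil_le hf hg hfg n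
  rw [h₁, h₂] at hle
  refine Nat.sInf_le (top_le_iff.1 (le_trans ?_ hle))
  exact le_inf (fun x _ ↦ LieIdeal.mem_comap.2 (LieSubmodule.mem_top (f x)))
    (fun x _ ↦ LieIdeal.mem_comap.2 (LieSubmodule.mem_top (g x)))

end NilpotentLength

theorem IsMinIdeal.inf_eq_bot {L : Type*} [LieRing L] [LieAlgebra F L] {A B : LieIdeal F L}
    (hA : IsMinIdeal F A) (hB : IsMinIdeal F B) (hne : A ≠ B) : A ⊓ B = ⊥ := by
  refine hA.2 _ (inf_le_left.lt_of_ne fun h ↦ hA.1 ?_)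
  exact hB.2 A ((inf_eq_left.1 h).lt_of_ne hne)

/-- If `L` has nilpotent length `k` and more than one minimal ideal, then some minimal
ideal `A` satisfies `n(L ⧸ A) = k`. -/
theorem stmt13 {F L : Type*} [Field F] [LieRing L] [LieAlgebra F L]
    [FiniteDimensional F L] [LieAlgebra.IsSolvable L]
    (A₁ A₂ : LieIdeal F L) (h1 : IsMinIdeal F A₁) (h2 : IsMinIdeal F A₂) (hne : A₁ ≠ A₂) :
    ∃ A : LieIdeal F L, IsMinIdeal F A ∧ nilLen F (L ⧸ A) = nilLen F L := by
  by_contra! h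
  have hlt : ∀ A, IsMinIdeal F A → nilLen F (L ⧸ A) < nilLen F L := fun A hA ↦
    (nilLen_le_of_surjective (lieQuotMk_surjective A)).lt_of_ne (h A hA)
  have hker : (lieQuotMk A₁).ker ⊓ (lieQuotMk A₂).ker = ⊥ := by
    rw [ker_lieQuotMk, ker_lieQuotMk]
    exact h1.inf_eq_bot h2 hne
  have hlen := nilLen_le_of_ker_inf_ker_eq_bot (lieQuotMk_surjective A₁)
    (lieQuotMk_surjective A₂) hker (Nat.le_sub_one_of_lt (hlt A₁ h1))
    (Nat.le_sub_one_of_lt (hlt A₂ h2))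
  have hlt₁ := hlt A₁ h1
  omega
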